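/- arXiv:1708.01657 — 2 statements merged into one kernel-verified Lean document; each statement's English description precedes it below -/
import Mathlib

section
/- (Group-replacement step of the weight-rounding lemma.) Let ℓ = k·g with k, g ≥ 1, and let w : Fin ℓ → ℝ be nondecreasing weights with 0 < w i ≤ 1. Partition Fin ℓ into k consecutive groups L₁, …, L_k of g items each (L_i consisting of indices (i−1)g, …, ig − 1), and define rounded weights w̃ by setting w̃ i equal to the weight of the largest-indexed item of the group containing i (so w̃ i ≥ w i, and w̃ is constant on each group). If F ⊆ Fin ℓ is packable into m unit-capacity bins under the weights w, then there exists a set F'' ⊆ Fin ℓ that is packable into m unit-capacity bins under the rounded weights w̃ and satisfies |F''| ≥ |F| − g. (F'' is obtained by dropping F ∩ L₁ and replacing each item of F ∩ L_i by an item of L_{i−1} for i ≥ 2.) -/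
/-- `T` is packable into `m` unit-capacity bins under weights `u`. -/
def Packable {N : ℕ} (u : Fin N → ℝ) (m : ℕ) (T : Finset (Fin N)) : Prop :=
  ∃ p : Fin N → Fin m, ∀ j : Fin m, ∑ i ∈ T.filter (fun i => p i = j), u i ≤ 1

/-!
Shift every item of index `i ≥ g` down by one group, to `i - g`. The rounded weight of `i - g` is
the weight of the last item of the group preceding that of `i`, an item of index below `i`, so by
monotonicity it is at most `w i`: the shifted packing loads no bin more than the original one.
The shift is injective, and only the at most `g` items of the first group are lost.
-/

open Finset

namespace Packable

variable {N m : ℕ} {u v : Fin N → ℝ} {S T : Finset (Fin N)}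

theorem subset (hST : S ⊆ T) (hu : 0 ≤ u) (h : Packable u m T) : Packable u m S := by
  obtain ⟨p, hp⟩ := h
  exact ⟨p, fun j => (sum_le_sum_of_subset_of_nonneg (filter_subset_filter _ hST)
    fun i _ _ => hu i).trans (hp j)⟩

theorem image_of_injOn {f : Fin N → Fin N} (hf : Set.InjOn f T)
    (hle : ∀ i ∈ T, v (f i) ≤ u i) (h : Packable u m T) : Packable v m (T.image f) := by
  obtain ⟨p, hp⟩ := h
  -- `Fin N` may be empty, so the instance `invFunOn` needs is built from the argument.
  let p' : Fin N → Fin m := fun y => haveI : Nonempty (Fin N) := ⟨y⟩; p (Function.invFunOn f T y)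
  have hp' : ∀ i ∈ T, p' (f i) = p i := fun i hi =>
    haveI : Nonempty (Fin N) := ⟨i⟩
    congrArg p (hf.leftInvOn_invFunOn hi)
  refine ⟨p', fun j => ?_⟩
  rw [filter_image, sum_image fun a ha b hb => hf (mem_filter.1 ha).1 (mem_filter.1 hb).1,
    filter_congr fun i hi => by rw [hp' i hi]]
  exact (sum_le_sum fun i hi => hle i (mem_filter.1 hi).1).trans (hp j)

end Packable

theorem Fin.card_filter_val_lt_le {n : ℕ} (s : Finset (Fin n)) (g : ℕ) :
    #(s.filter fun i => i.val < g) ≤ g :=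
  (card_le_card (filter_subset_filter _ (subset_univ s))).trans
    (Fin.card_filter_val_lt.trans_le (min_le_right _ _))

theorem Nat.sub_div_mul_add_pred_le {g i : ℕ} (h : g ≤ i) : (i - g) / g * g + (g - 1) ≤ i := by
  have := Nat.div_mul_le_self (i - g) g
  omega

theorem group_replacement
    (m k g : ℕ) (hg : 1 ≤ g)
    (w : Fin (k * g) → ℝ)
    (hw : ∀ i, 0 < w i ∧ w i ≤ 1) (hmono : Monotone w)
    (w' : Fin (k * g) → ℝ)
    (hw' : ∀ i : Fin (k * g),
      w' i = w ⟨i.val / g * g + (g - 1), by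
        have h1 : i.val < g * k := lt_of_lt_of_eq i.isLt (Nat.mul_comm k g)
        have h2 : i.val / g < k := Nat.div_lt_of_lt_mul h1
        have h3 : (i.val / g + 1) * g ≤ k * g := Nat.mul_le_mul_right g h2
        have h4 : i.val / g * g + 1 * g ≤ k * g := by rw [← Nat.add_mul]; exact h3
        omega⟩)
    (F : Finset (Fin (k * g))) (hF : Packable w m F) :
    ∃ F'' : Finset (Fin (k * g)), Packable w' m F'' ∧ F.card ≤ F''.card + g := by
  let shift : Fin (k * g) → Fin (k * g) := fun i => ⟨i - g, (Nat.sub_le _ _).trans_lt i.isLt⟩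
  let F₁ := F.filter fun i => g ≤ i.val
  have hinj : Set.InjOn shift F₁ := fun a ha b hb hab => by
    have hga := (mem_filter.1 ha).2
    have hgb := (mem_filter.1 hb).2
    have hval : a.val - g = b.val - g := congrArg Fin.val hab
    exact Fin.ext (by omega)
  have hle : ∀ i ∈ F₁, w' (shift i) ≤ w i := fun i hi => by
    rw [hw']
    exact hmono (Nat.sub_div_mul_add_pred_le (mem_filter.1 hi).2)
  refine ⟨F₁.image shift,
    (hF.subset (filter_subset _ _) fun i => (hw i).1.le).image_of_injOn hinj hle, ?_⟩
  have hsplit : #F₁ + #(F.filter fun i => i.val < g) = #F := by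
    simpa only [not_le] using card_filter_add_card_filter_not (s := F) fun i => g ≤ i.val
  have hfirst := Fin.card_filter_val_lt_le F g
  rw [card_image_of_injOn hinj]
  omega
end

section
/- (Correctness of the PTAS packing.) Let ε ∈ (0, 2/3] and let w : Fin n → ℝ be nondecreasing weights with 0 < w i ≤ 1. Let S = {i : w i ≤ ε} and L = {i : w i > ε}, and assume w(S) ≤ m(1 − ε). Let L' be the maximal initial segment of L (in the sorted order) satisfying w(L') ≤ m(1 − ε) − w(S), write ℓ = |L'|, and assume ℓ = k·g for integers k ≥ 1 and 1 ≤ g ≤ εm. Let w̃ be the rounded weights on L' obtained by partitioning L' into k consecutive groups of g items and raising each weight in a group to the largest weight in that group. Let F' be a maximum-cardinality subset of L' that is packable into m unit-capacity bins under w̃. Then: (i) F' ∪ S is packable into m unit-capacity bins under the original weights w; and (ii) every set T ⊆ Fin n packable into m unit-capacity bins satisfies |T| ≤ (1 + 3ε)·(|F'| + |S| + g). In particular the packing of F' ∪ S is a 1 + O(ε) approximation to the optimum. -/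
open Finset

lemma packable_total {N m : ℕ} {u : Fin N → ℝ} {X : Finset (Fin N)}
    (h : Packable u m X) : ∑ i ∈ X, u i ≤ m := by
  obtain ⟨p, hp⟩ := h
  calc ∑ i ∈ X, u i = ∑ j : Fin m, ∑ i ∈ X.filter (fun i => p i = j), u i :=
        (Finset.sum_fiberwise X p u).symm
    _ ≤ ∑ _j : Fin m, (1 : ℝ) := Finset.sum_le_sum fun j _ => hp j
    _ = m := by simp

lemma packable_of_inj {N m : ℕ} {u v : Fin N → ℝ} {X Y : Finset (Fin N)} (f : Fin N → Fin N)
    (hinj : ∀ i ∈ Y, ∀ i' ∈ Y, f i = f i' → i = i')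
    (himg : ∀ i ∈ Y, f i ∈ X) (hdom : ∀ i ∈ Y, v i ≤ u (f i))
    (hu : ∀ i ∈ X, 0 ≤ u i) (h : Packable u m X) : Packable v m Y := by
  obtain ⟨p, hp⟩ := h
  refine ⟨fun i => p (f i), fun j => ?_⟩
  have hsub : (Y.filter (fun i => p (f i) = j)).image f ⊆ X.filter (fun i => p i = j) := by
    intro x hx
    obtain ⟨i, hi, rfl⟩ := Finset.mem_image.mp hx
    have hi' := Finset.mem_filter.mp hi
    exact Finset.mem_filter.mpr ⟨himg i hi'.1, hi'.2⟩
  calc ∑ i ∈ Y.filter (fun i => p (f i) = j), v i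
      ≤ ∑ i ∈ Y.filter (fun i => p (f i) = j), u (f i) :=
        Finset.sum_le_sum fun i hi => hdom i (Finset.mem_filter.mp hi).1
    _ = ∑ x ∈ (Y.filter (fun i => p (f i) = j)).image f, u x := by
        rw [Finset.sum_image]
        intro i hi i' hi' hee
        exact hinj i (Finset.mem_filter.mp hi).1 i' (Finset.mem_filter.mp hi').1 hee
    _ ≤ ∑ x ∈ X.filter (fun i => p i = j), u x :=
        Finset.sum_le_sum_of_subset_of_nonneg hsub
          (fun x hx _ => hu x (Finset.mem_filter.mp hx).1)
    _ ≤ 1 := hp j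

lemma card_filter_interval {n : ℕ} (a r : ℕ) (h : a + r ≤ n) :
    (Finset.univ.filter (fun i : Fin n => a ≤ i.val ∧ i.val < a + r)).card = r := by
  apply Finset.card_eq_of_bijective (fun j hj => ⟨a + j, by omega⟩)
  · intro x hx
    have hx' := (Finset.mem_filter.mp hx).2
    exact ⟨x.val - a, by omega, by ext; simp; omega⟩
  · intro j hj
    simp only [Finset.mem_filter, Finset.mem_univ, true_and]
    omega
  · intro i j hi hj hij
    simp [Fin.mk.injEq] at hij
    omega

lemma S_mem_iff {n : ℕ} (w : Fin n → ℝ) (hmono : Monotone w) (ε : ℝ)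
    (S : Finset (Fin n)) (hSdef : S = Finset.univ.filter (fun i => w i ≤ ε)) :
    ∀ i : Fin n, i ∈ S ↔ i.val < S.card := by
  intro i
  constructor
  · intro hi
    have hwi : w i ≤ ε := by
      rw [hSdef] at hi; exact (Finset.mem_filter.mp hi).2
    have hsub : (Finset.univ.filter (fun j : Fin n => 0 ≤ j.val ∧ j.val < 0 + (i.val + 1))) ⊆ S := by
      intro j hj
      have hj' := (Finset.mem_filter.mp hj).2
      have : j ≤ i := by rw [Fin.le_def]; omega
      rw [hSdef]
      exact Finset.mem_filter.mpr ⟨Finset.mem_univ _, le_trans (hmono this) hwi⟩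
    have := Finset.card_le_card hsub
    rw [card_filter_interval 0 (i.val + 1) (by omega)] at this
    omega
  · intro hi
    by_contra hni
    have hwi : ε < w i := by
      rw [hSdef] at hni
      simp only [Finset.mem_filter, Finset.mem_univ, true_and] at hni
      linarith [not_le.mp hni]
    have hsub : S ⊆ Finset.univ.filter (fun j : Fin n => 0 ≤ j.val ∧ j.val < 0 + i.val) := by
      intro j hj
      rw [hSdef] at hj
      have hj' := (Finset.mem_filter.mp hj).2
      simp only [Finset.mem_filter, Finset.mem_univ, true_and]
      refine ⟨by omega, ?_⟩
      by_contra hc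
      have : i ≤ j := by rw [Fin.le_def]; omega
      linarith [hmono this]
    have := Finset.card_le_card hsub
    rw [card_filter_interval 0 i.val (by omega)] at this
    omega

lemma posval {n t : ℕ} (TL : Finset (Fin n)) (ht : TL.card = t) (c : ℕ)
    (hTL : ∀ x ∈ TL, c ≤ x.val) :
    ∀ j : Fin t, c + j.val ≤ ((TL.orderIsoOfFin ht j : {x // x ∈ TL}) : Fin n).val := by
  have key : ∀ r : ℕ, ∀ hr : r < t,
      c + r ≤ ((TL.orderIsoOfFin ht ⟨r, hr⟩ : {x // x ∈ TL}) : Fin n).val := by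
    intro r
    induction r with
    | zero =>
      intro hr
      have := hTL _ (TL.orderIsoOfFin ht ⟨0, hr⟩).2
      omega
    | succ r ih =>
      intro hr
      have hr' : r < t := by omega
      have h1 := ih hr'
      have hlt : TL.orderIsoOfFin ht ⟨r, hr'⟩ < TL.orderIsoOfFin ht ⟨r+1, hr⟩ := by
        apply (TL.orderIsoOfFin ht).strictMono
        simp [Fin.lt_def]
      have h2 : ((TL.orderIsoOfFin ht ⟨r, hr'⟩ : {x // x ∈ TL}) : Fin n).val
          < ((TL.orderIsoOfFin ht ⟨r+1, hr⟩ : {x // x ∈ TL}) : Fin n).val := by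
        exact_mod_cast hlt
      omega
  intro j
  have := key j.val j.2
  simpa using this
set_option maxHeartbeats 1000000 in
theorem ptas_correct
    (n m : ℕ) (hm : 1 ≤ m) (w : Fin n → ℝ)
    (hw : ∀ i, 0 < w i ∧ w i ≤ 1) (hmono : Monotone w)
    (ε : ℝ) (hε0 : 0 < ε) (hε1 : ε ≤ 2/3)
    -- the small items `S` and the assumption that FFI packs all of them
    (S : Finset (Fin n)) (hSdef : S = Finset.univ.filter (fun i => w i ≤ ε))
    (hwS : ∑ i ∈ S, w i ≤ m * (1 - ε))
    -- the candidate large items `L'`: the maximal initial segment of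
    -- `L = {i | ε < w i}` whose weight fits in `m * (1 - ε) - w S`
    (ℓ k g : ℕ) (hℓ : ℓ = k * g) (hk : 1 ≤ k) (hg : 1 ≤ g)
    (hgm : (g : ℝ) ≤ ε * m)
    (hfit : S.card + ℓ ≤ n)
    (L' : Finset (Fin n))
    (hL'def : L' = Finset.univ.filter
      (fun i : Fin n => S.card ≤ i.val ∧ i.val < S.card + ℓ))
    (hL'wt : ∑ i ∈ L', w i ≤ m * (1 - ε) - ∑ i ∈ S, w i)
    (hL'max : ∀ i : Fin n, i.val = S.card + ℓ →
      m * (1 - ε) - (∑ i' ∈ S, w i') < (∑ i' ∈ L', w i') + w i)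
    -- the rounded weights: on `L'`, each weight is raised to the largest
    -- weight of its group of `g` consecutive items; unchanged elsewhere
    (w' : Fin n → ℝ)
    (hw'in : ∀ i : Fin n, ∀ hi : S.card ≤ i.val ∧ i.val < S.card + ℓ,
      w' i = w ⟨S.card + (i.val - S.card) / g * g + (g - 1), by
        obtain ⟨ha, hb⟩ := hi
        have h1 : i.val - S.card < g * k := by
          calc i.val - S.card < ℓ := by omega
            _ = k * g := hℓ
            _ = g * k := Nat.mul_comm k g
        have h2 : (i.val - S.card) / g < k := Nat.div_lt_of_lt_mul h1
        have h3 : ((i.val - S.card) / g + 1) * g ≤ k * g := Nat.mul_le_mul_right g h2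
        have h4 : (i.val - S.card) / g * g + 1 * g ≤ k * g := by
          rw [← Nat.add_mul]; exact h3
        omega⟩)
    (hw'out : ∀ i : Fin n, ¬(S.card ≤ i.val ∧ i.val < S.card + ℓ) → w' i = w i)
    -- `F'`: a maximum-cardinality subset of `L'` packable under `w'`
    (F' : Finset (Fin n)) (hF'sub : F' ⊆ L')
    (hF'pack : Packable w' m F')
    (hF'max : ∀ T ⊆ L', Packable w' m T → T.card ≤ F'.card) :
    Packable w m (F' ∪ S) ∧
      ∀ T : Finset (Fin n), Packable w m T →
        (T.card : ℝ) ≤ (1 + 3 * ε) * (F'.card + S.card + g) := by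
  classical
  have hwpos : ∀ i, 0 < w i := fun i => (hw i).1
  have hSmem : ∀ i : Fin n, i ∈ S ↔ i.val < S.card := S_mem_iff w hmono ε S hSdef
  have hL'mem : ∀ i : Fin n, i ∈ L' ↔ (S.card ≤ i.val ∧ i.val < S.card + ℓ) := by
    intro i; rw [hL'def]; simp
  have hεlt : ∀ i : Fin n, S.card ≤ i.val → ε < w i := by
    intro i hi
    by_contra hc
    have : i ∈ S := by rw [hSdef]; simp only [Finset.mem_filter, Finset.mem_univ, true_and]; linarith
    rw [hSmem] at this; omega
  have hwleS : ∀ i ∈ S, w i ≤ ε := by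
    intro i hi; rw [hSdef] at hi; exact (Finset.mem_filter.mp hi).2
  have hLnotS : ∀ i ∈ L', i ∉ S := by
    intro i hi
    rw [hSmem]
    have := (hL'mem i).1 hi
    omega
  have hL'card : L'.card = ℓ := by rw [hL'def]; exact card_filter_interval _ _ hfit
  -- rounded weight facts
  have hw'ge : ∀ i ∈ L', w i ≤ w' i := by
    intro i hi
    have hi' := (hL'mem i).1 hi
    rw [hw'in i hi']
    apply hmono
    rw [Fin.le_def]
    simp only
    have h1 := Nat.div_mul_le_self (i.val - S.card) g
    have h2 := Nat.lt_div_mul_add (a := i.val - S.card) (show 0 < g by omega)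
    omega
  have hw'le : ∀ i ∈ L', ∀ j : Fin n, i.val + g ≤ j.val + 1 → w' i ≤ w j := by
    intro i hi j hj
    have hi' := (hL'mem i).1 hi
    rw [hw'in i hi']
    apply hmono
    rw [Fin.le_def]
    simp only
    have h1 := Nat.div_mul_le_self (i.val - S.card) g
    omega
  have hw'pos : ∀ i, 0 ≤ w' i := by
    intro i
    by_cases hc : S.card ≤ i.val ∧ i.val < S.card + ℓ
    · rw [hw'in i hc]; exact (hwpos _).le
    · rw [hw'out i hc]; exact (hwpos i).le
  -- Part 1
  have hpackF' : Packable w m F' :=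
    packable_of_inj id (fun i _ i' _ h => h) (fun i hi => hi)
      (fun i hi => hw'ge i (hF'sub hi)) (fun i _ => hw'pos i) hF'pack
  have hmain : ∀ U : Finset (Fin n), U ⊆ S → Packable w m (F' ∪ U) := by
    intro U
    induction U using Finset.induction_on with
    | empty => intro _; simpa using hpackF'
    | @insert a U ha IH =>
      intro hsub
      have haS : a ∈ S := hsub (Finset.mem_insert_self a U)
      have hUS : U ⊆ S := fun x hx => hsub (Finset.mem_insert_of_mem hx)
      obtain ⟨p, hp⟩ := IH hUS
      have haF' : a ∉ F' := fun hc => hLnotS a (hF'sub hc) haS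
      have haX : a ∉ F' ∪ U := by
        simp only [Finset.mem_union]
        rintro (h | h)
        · exact haF' h
        · exact ha h
      have hdisjF'U : Disjoint F' U := by
        rw [Finset.disjoint_left]
        intro x hx hxU
        exact hLnotS x (hF'sub hx) (hUS hxU)
      have hsumX : ∑ i ∈ F' ∪ U, w i + w a ≤ m * (1 - ε) := by
        rw [Finset.sum_union hdisjF'U]
        have h1 : ∑ i ∈ F', w i ≤ ∑ i ∈ L', w i :=
          Finset.sum_le_sum_of_subset_of_nonneg hF'sub (fun i _ _ => (hwpos i).le)
        have h2 : ∑ i ∈ insert a U, w i ≤ ∑ i ∈ S, w i :=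
          Finset.sum_le_sum_of_subset_of_nonneg hsub (fun i _ _ => (hwpos i).le)
        rw [Finset.sum_insert ha] at h2
        linarith
      have hexists : ∃ j : Fin m, ∑ i ∈ (F' ∪ U).filter (fun i => p i = j), w i ≤ 1 - ε := by
        by_contra hcon
        push_neg at hcon
        have htot : ∑ j : Fin m, ∑ i ∈ (F' ∪ U).filter (fun i => p i = j), w i
            = ∑ i ∈ F' ∪ U, w i := Finset.sum_fiberwise _ _ _
        have hne : (Finset.univ : Finset (Fin m)).Nonempty := ⟨⟨0, hm⟩, Finset.mem_univ _⟩
        have hlt : ∑ _j : Fin m, (1 - ε)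
            < ∑ j : Fin m, ∑ i ∈ (F' ∪ U).filter (fun i => p i = j), w i :=
          Finset.sum_lt_sum_of_nonempty hne (fun j _ => hcon j)
        rw [Finset.sum_const, Finset.card_univ, Fintype.card_fin, nsmul_eq_mul, htot] at hlt
        have := hwpos a
        linarith
      obtain ⟨j, hj⟩ := hexists
      refine ⟨Function.update p a j, fun j' => ?_⟩
      have hXeq : F' ∪ insert a U = insert a (F' ∪ U) := by
        rw [Finset.union_insert]
      rw [hXeq]
      by_cases hjj : j' = j
      · subst hjj
        have h1 : (insert a (F' ∪ U)).filter (fun i => Function.update p a j' i = j')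
            = insert a ((F' ∪ U).filter (fun i => p i = j')) := by
          rw [Finset.filter_insert, if_pos (by simp)]
          congr 1
          apply Finset.filter_congr
          intro i hi
          have hne : i ≠ a := fun h => haX (h ▸ hi)
          simp [Function.update_of_ne hne]
        rw [h1, Finset.sum_insert (by
          simp only [Finset.mem_filter]
          exact fun hc => haX hc.1)]
        have := hwleS a haS
        linarith
      · have h1 : (insert a (F' ∪ U)).filter (fun i => Function.update p a j i = j')
            = (F' ∪ U).filter (fun i => p i = j') := by
          rw [Finset.filter_insert, if_neg (by simp [Ne.symm hjj])]
          apply Finset.filter_congr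
          intro i hi
          have hne : i ≠ a := fun h => haX (h ▸ hi)
          simp [Function.update_of_ne hne]
        rw [h1]
        exact hp j'
  constructor
  · exact hmain S (subset_refl S)
  ·
    intro T hTpack
    set TS := T ∩ S with hTSdef
    set TL := T \ S with hTLdef
    have hcardsplit : TL.card + TS.card = T.card := Finset.card_sdiff_add_card_inter T S
    have hTLge : ∀ x ∈ TL, S.card ≤ x.val := by
      intro x hx
      have hxS := (Finset.mem_sdiff.mp hx).2
      rw [hSmem] at hxS
      omega
    have hTLT : TL ⊆ T := Finset.sdiff_subset
    have hTST : TS ⊆ S := Finset.inter_subset_right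
    have hsσ : TS.card ≤ S.card := Finset.card_le_card hTST
    -- weight facts
    have hA0 : (0:ℝ) ≤ ∑ i ∈ S, w i := Finset.sum_nonneg fun i _ => (hwpos i).le
    have hW0 : (0:ℝ) ≤ ∑ i ∈ TS, w i := Finset.sum_nonneg fun i _ => (hwpos i).le
    have hWA : ∑ i ∈ TS, w i ≤ ∑ i ∈ S, w i :=
      Finset.sum_le_sum_of_subset_of_nonneg hTST (fun i _ _ => (hwpos i).le)
    have hsplitsum : ∑ i ∈ TS, w i + ∑ i ∈ TL, w i = ∑ i ∈ T, w i :=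
      Finset.sum_inter_add_sum_sdiff T S w
    have hTm : ∑ i ∈ T, w i ≤ m := packable_total hTpack
    have hAσ : ∑ i ∈ S, w i ≤ ε * S.card := by
      have := Finset.sum_le_card_nsmul S w ε hwleS
      rw [nsmul_eq_mul] at this
      linarith
    have hDσ : ∑ i ∈ S, w i - ∑ i ∈ TS, w i ≤ ε * ((S.card : ℝ) - TS.card) := by
      have h1 : ∑ i ∈ S ∩ T, w i + ∑ i ∈ S \ T, w i = ∑ i ∈ S, w i :=
        Finset.sum_inter_add_sum_sdiff S T w
      have h2 : ∑ i ∈ S ∩ T, w i = ∑ i ∈ TS, w i := by rw [Finset.inter_comm]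
      have h3 : ∑ i ∈ S \ T, w i ≤ (S \ T).card • ε :=
        Finset.sum_le_card_nsmul _ _ _ (fun i hi => hwleS i (Finset.mem_sdiff.mp hi).1)
      have h4 : (S \ T).card + (S ∩ T).card = S.card := Finset.card_sdiff_add_card_inter S T
      have h5 : (S ∩ T).card = TS.card := by rw [Finset.inter_comm]
      rw [nsmul_eq_mul] at h3
      have h6 : ((S \ T).card : ℝ) = (S.card : ℝ) - TS.card := by
        rw [← h5, ← h4]; push_cast; ring
      rw [h6] at h3
      linarith
    -- the sorted enumeration of TL
    have hpos := posval TL rfl S.card hTLge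
    -- general bound: any r ≤ ℓ with r + g ≤ TL.card embeds shifted into F'
    have hbound : ∀ r : ℕ, r ≤ ℓ → r + g ≤ TL.card → r ≤ F'.card := by
      intro r hrl hrg
      set Y := Finset.univ.filter (fun i : Fin n => S.card ≤ i.val ∧ i.val < S.card + r) with hY
      have hYsub : Y ⊆ L' := by
        intro i hi
        rw [hL'mem]
        have := (Finset.mem_filter.mp hi).2
        omega
      have hYcard : Y.card = r := card_filter_interval _ _ (by omega)
      have hYpack : Packable w' m Y := by
        apply packable_of_inj
          (f := fun i => if h : i.val - S.card + g < TL.card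
            then ((TL.orderIsoOfFin rfl ⟨i.val - S.card + g, h⟩ : {x // x ∈ TL}) : Fin n)
            else i) (u := w) (X := T) (h := hTpack)
        · intro i hi i' hi' heq
          have h1 := (Finset.mem_filter.mp hi).2
          have h2 := (Finset.mem_filter.mp hi').2
          try dsimp only at heq
          rw [dif_pos (show i.val - S.card + g < TL.card by omega),
            dif_pos (show i'.val - S.card + g < TL.card by omega)] at heq
          have h3 := (TL.orderIsoOfFin rfl).injective (Subtype.ext heq)
          have hvv : i.val - S.card + g = i'.val - S.card + g := Fin.mk.inj_iff.mp h3
          exact Fin.ext (by omega)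
        · intro i hi
          have h1 := (Finset.mem_filter.mp hi).2
          try dsimp only
          rw [dif_pos (show i.val - S.card + g < TL.card by omega)]
          exact hTLT (TL.orderIsoOfFin rfl _).2
        · intro i hi
          have h1 := (Finset.mem_filter.mp hi).2
          have hlt : i.val - S.card + g < TL.card := by omega
          try dsimp only
          rw [dif_pos hlt]
          apply hw'le i (hYsub hi)
          have := hpos ⟨i.val - S.card + g, hlt⟩
          simp only at this
          omega
        · exact fun i _ => (hwpos i).le
      have := hF'max Y hYsub hYpack
      omega
    by_cases hcase : TL.card ≤ ℓ + g
    · -- easy branch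
      have htF : TL.card ≤ F'.card + g := by
        rcases le_or_gt TL.card g with h | h
        · omega
        · have := hbound (TL.card - g) (by omega) (by omega); omega
      have hcard : T.card ≤ F'.card + S.card + g := by omega
      have h0 : (0:ℝ) ≤ (F'.card : ℝ) + S.card + g := by positivity
      have h1 : (T.card : ℝ) ≤ (F'.card : ℝ) + S.card + g := by exact_mod_cast hcard
      nlinarith
    · push_neg at hcase
      have hℓF : ℓ ≤ F'.card := hbound ℓ le_rfl (by omega)
      have hℓt : ℓ ≤ TL.card := by omega
      -- the critical item i₀ of weight b
      have hi0lt : S.card + ℓ < n := by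
        have hj : ℓ < TL.card := by omega
        have h1 := hpos ⟨ℓ, hj⟩
        have h2 := ((TL.orderIsoOfFin rfl ⟨ℓ, hj⟩ : {x // x ∈ TL}) : Fin n).isLt
        simp only at h1
        omega
      obtain ⟨i₀, hi₀v⟩ : ∃ i₀ : Fin n, i₀.val = S.card + ℓ := ⟨⟨S.card + ℓ, hi0lt⟩, rfl⟩
      have hbε : ε < w i₀ := hεlt i₀ (by omega)
      have hb1 : w i₀ ≤ 1 := (hw i₀).2
      have h2' : (m:ℝ) * (1-ε) ≤ ∑ i ∈ L', w i + ∑ i ∈ S, w i + w i₀ := by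
        have := hL'max i₀ hi₀v
        linarith
      have h7 : ∑ i ∈ L', w i ≤ (ℓ:ℝ) * w i₀ := by
        have hle : ∀ i ∈ L', w i ≤ w i₀ := by
          intro i hi
          apply hmono
          rw [Fin.le_def]
          have := (hL'mem i).1 hi
          omega
        have := Finset.sum_le_card_nsmul L' w (w i₀) hle
        rw [nsmul_eq_mul, hL'card] at this
        exact this
      -- compare TL with L' ∪ (extras of weight ≥ b)
      have hfmap : ∃ A' : Finset (Fin n), A' ⊆ TL ∧ A'.card = ℓ ∧
          (∑ i ∈ L', w i ≤ ∑ x ∈ A', w x) ∧ (∀ x ∈ TL \ A', w i₀ ≤ w x) := by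
        refine ⟨L'.image (fun i => if h : i.val - S.card < TL.card
            then ((TL.orderIsoOfFin rfl ⟨i.val - S.card, h⟩ : {x // x ∈ TL}) : Fin n)
            else i), ?_, ?_, ?_, ?_⟩
        · intro x hx
          obtain ⟨i, hi, rfl⟩ := Finset.mem_image.mp hx
          have h1 := (hL'mem i).1 hi
          try dsimp only
          rw [dif_pos (show i.val - S.card < TL.card by omega)]
          exact (TL.orderIsoOfFin rfl _).2
        · rw [Finset.card_image_of_injOn, hL'card]
          intro i hi i' hi' heq
          have h1 := (hL'mem i).1 hi
          have h2 := (hL'mem i').1 hi'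
          try dsimp only at heq
          rw [dif_pos (show i.val - S.card < TL.card by omega),
            dif_pos (show i'.val - S.card < TL.card by omega)] at heq
          have h3 := (TL.orderIsoOfFin rfl).injective (Subtype.ext heq)
          have hvv : i.val - S.card = i'.val - S.card := Fin.mk.inj_iff.mp h3
          exact Fin.ext (by omega)
        · rw [Finset.sum_image (by
            intro i hi i' hi' heq
            have h1 := (hL'mem i).1 hi
            have h2 := (hL'mem i').1 hi'
            try dsimp only at heq
            rw [dif_pos (show i.val - S.card < TL.card by omega),
              dif_pos (show i'.val - S.card < TL.card by omega)] at heq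
            have h3 := (TL.orderIsoOfFin rfl).injective (Subtype.ext heq)
            have hvv : i.val - S.card = i'.val - S.card := Fin.mk.inj_iff.mp h3
            exact Fin.ext (by omega))]
          apply Finset.sum_le_sum
          intro i hi
          have h1 := (hL'mem i).1 hi
          have hlt : i.val - S.card < TL.card := by omega
          try dsimp only
          rw [dif_pos hlt]
          apply hmono
          rw [Fin.le_def]
          have := hpos ⟨i.val - S.card, hlt⟩
          simp only at this
          omega
        · intro x hx
          obtain ⟨hxTL, hxA⟩ := Finset.mem_sdiff.mp hx
          obtain ⟨j, hj⟩ : ∃ j : Fin TL.card,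
              ((TL.orderIsoOfFin rfl j : {x // x ∈ TL}) : Fin n) = x :=
            ⟨(TL.orderIsoOfFin rfl).symm ⟨x, hxTL⟩, by simp⟩
          by_cases hjl : j.val < ℓ
          · exfalso
            apply hxA
            apply Finset.mem_image.mpr
            refine ⟨⟨S.card + j.val, by omega⟩, ?_, ?_⟩
            · rw [hL'mem]
              exact ⟨by simp only [Fin.val_mk]; omega, by simp only [Fin.val_mk]; omega⟩
            · try dsimp only
              have hlt : ((⟨S.card + j.val, by omega⟩ : Fin n)).val - S.card < TL.card := by
                simp only [Nat.add_sub_cancel_left]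
                exact j.isLt
              rw [dif_pos hlt, ← hj]
              have hje : (⟨(⟨S.card + j.val, by omega⟩ : Fin n).val - S.card, hlt⟩ : Fin TL.card) = j := by
                apply Fin.ext
                show S.card + j.val - S.card = j.val
                omega
              rw [hje]
          · apply hmono
            rw [Fin.le_def]
            have := hpos j
            rw [hj] at this
            omega
      obtain ⟨A', hA'sub, hA'card, hsum1, hbig⟩ := hfmap
      have hsum2 : ((TL.card - ℓ : ℕ):ℝ) * w i₀ ≤ ∑ x ∈ TL \ A', w x := by
        have := Finset.card_nsmul_le_sum (TL \ A') w (w i₀) hbig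
        rw [nsmul_eq_mul, Finset.card_sdiff_of_subset hA'sub, hA'card] at this
        exact this
      have hF2 : ∑ i ∈ L', w i + ((TL.card:ℝ) - ℓ) * w i₀ ≤ ∑ x ∈ TL, w x := by
        have hsd := Finset.sum_sdiff (f := w) hA'sub
        have hc : ((TL.card - ℓ : ℕ):ℝ) = (TL.card:ℝ) - ℓ := by
          push_cast [hℓt]; ring
        rw [hc] at hsum2
        linarith
      -- now pure arithmetic
      have hb0 : (0:ℝ) < w i₀ := lt_trans hε0 hbε
      have h1 : ((TL.card:ℝ) - ℓ) * w i₀ ≤ m - ∑ i ∈ L', w i - ∑ i ∈ TS, w i := by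
        linarith
      set b := w i₀ with hbdef
      set A := ∑ i ∈ S, w i with hAdef
      set W := ∑ i ∈ TS, w i with hWdef
      set wL := ∑ i ∈ L', w i with hwLdef
      have hDnn : (0:ℝ) ≤ A - W := by linarith
      have ht_le : (TL.card:ℝ) ≤ ℓ + (m - wL - W)/b := by
        have := (le_div_iff₀ hb0).mpr h1
        linarith
      have hkey : (m - wL - W)/b ≤ 3*ε*ℓ + 3*A + (A-W)/ε + (1+3*ε)*g := by
        rw [div_le_iff₀ hb0]
        have e1 : A - W ≤ (A-W)/ε * b := by
          have h := mul_le_mul_of_nonneg_left hbε.le (div_nonneg hDnn hε0.le)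
          rwa [div_mul_cancel₀ _ (ne_of_gt hε0)] at h
        have p1 : 3*ε*wL ≤ 3*ε*((ℓ:ℝ)*b) :=
          mul_le_mul_of_nonneg_left h7 (by linarith)
        have p2 : ε*A ≤ b*A := mul_le_mul_of_nonneg_right hbε.le hA0
        have p3 : (1+3*ε)*((m:ℝ)*(1-ε)) ≤ (1+3*ε)*(wL + A + b) :=
          mul_le_mul_of_nonneg_left h2' (by linarith)
        have p4 : (1+3*ε)*(b*1) ≤ (1+3*ε)*(b*(g:ℝ)) := by
          apply mul_le_mul_of_nonneg_left _ (by linarith : (0:ℝ) ≤ 1+3*ε)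
          have : (1:ℝ) ≤ (g:ℝ) := by exact_mod_cast hg
          exact mul_le_mul_of_nonneg_left this hb0.le
        have p5 : (0:ℝ) ≤ (m:ℝ)*(ε*(2-3*ε)) := by
          apply mul_nonneg (Nat.cast_nonneg m)
          apply mul_nonneg hε0.le
          linarith
        nlinarith [e1, p1, p2, p3, p4, p5]
      have hσ1 : (TS.card:ℝ) + (A-W)/ε ≤ S.card := by
        have h := (div_le_iff₀ hε0).mpr (by linarith [hDσ] : A - W ≤ ((S.card:ℝ) - TS.card)*ε)
        linarith
      have hσ2 : 3*A ≤ 3*(ε*(S.card:ℝ)) := by linarith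
      have hF'mul : (1+3*ε)*(ℓ:ℝ) ≤ (1+3*ε)*(F'.card:ℝ) := by
        apply mul_le_mul_of_nonneg_left _ (by linarith : (0:ℝ) ≤ 1+3*ε)
        exact_mod_cast hℓF
      have hTcard : (T.card : ℝ) = (TL.card:ℝ) + TS.card := by exact_mod_cast hcardsplit.symm
      rw [hTcard]
      linarith [ht_le, hkey, hσ1, hσ2, hF'mul]
end
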